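/- Let φ = ∃x₁∀x₂∃x₃⋯Qxₙ ψ be a quantified Boolean formula with strictly alternating quantifiers starting with ∃, where ψ is a propositional formula in conjunctive normal form over the variables x₁,…,xₙ. Define f(φ) = (@_s ◇◇⊤) ∧ (@_s ◇□⊥) ∧ @_s◇↓x₁.@_s□↓x₂.⋯@_sQ'↓xₙ. r(ψ), where Q' = ◇ if Q = ∃ and Q' = □ if Q = ∀, and r(ψ) is obtained from ψ by replacing every positive literal x_i by @_{x_i}◇⊤ and every negative literal ¬x_i by @_{x_i}□⊥ (constants unchanged); here s is a nominal and x₁,…,xₙ are state variables. Let K₂ = (W,R,η) be the Kripke structure with W = {s,t}, R = {(s,s),(s,t)} (so (W,R) is a transitive frame) and η(s) = {s} for the nominal s. Then φ evaluates to true if and only if K₂,g,s ⊨ f(φ) for every assignment g. -/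

import Mathlib

/-- Hybrid logic formulas over countable sets of atomic propositions,
nominals and state variables (each indexed by `ℕ`). -/
inductive HForm : Type where
  | prop : ℕ → HForm
  | nom  : ℕ → HForm
  | svar : ℕ → HForm
  | top  : HForm
  | bot  : HForm
  | neg  : HForm → HForm
  | and  : HForm → HForm → HForm
  | or   : HForm → HForm → HForm
  | dia  : HForm → HForm
  | box  : HForm → HForm
  | bind : ℕ → HForm → HForm
  | atN  : ℕ → HForm → HForm
  | atV  : ℕ → HForm → HForm
deriving DecidableEq

/-- A (hybrid) Kripke structure: states, transition relation, labeling of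
propositions by sets of states and of nominals by (single) states. -/
structure Kripke (W : Type) where
  rel : W → W → Prop
  vProp : ℕ → Set W
  vNom : ℕ → W

/-- Update of an assignment: `updAsg g x w` is the `x`-variant of `g` mapping `x` to `w`. -/
def updAsg {W : Type} (g : ℕ → W) (x : ℕ) (w : W) : ℕ → W :=
  fun y => if y = x then w else g y

/-- The satisfaction relation `K, g, w ⊨ φ`. -/
def Sat {W : Type} (K : Kripke W) : (ℕ → W) → W → HForm → Prop
  | _, w, .prop p => w ∈ K.vProp p
  | _, w, .nom i => w = K.vNom i
  | g, w, .svar x => w = g x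
  | _, _, .top => True
  | _, _, .bot => False
  | g, w, .neg φ => ¬ Sat K g w φ
  | g, w, .and φ ψ => Sat K g w φ ∧ Sat K g w ψ
  | g, w, .or φ ψ => Sat K g w φ ∨ Sat K g w ψ
  | g, w, .dia φ => ∃ v, K.rel w v ∧ Sat K g v φ
  | g, w, .box φ => ∀ v, K.rel w v → Sat K g v φ
  | g, w, .bind x φ => Sat K (updAsg g x w) w φ
  | g, _, .atN i φ => Sat K g (K.vNom i) φ
  | g, _, .atV x φ => Sat K g (g x) φ

/-- Satisfiability over the class of all frames. -/
def SatisfiableAll (φ : HForm) : Prop :=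
  ∃ (W : Type) (K : Kripke W) (g : ℕ → W) (w : W), Sat K g w φ

/-- Satisfiability over the class of transitive frames. -/
def SatisfiableTrans (φ : HForm) : Prop :=
  ∃ (W : Type) (K : Kripke W), Transitive K.rel ∧ ∃ (g : ℕ → W) (w : W), Sat K g w φ

/-- Satisfiability over the class of total frames. -/
def SatisfiableTotal (φ : HForm) : Prop :=
  ∃ (W : Type) (K : Kripke W), (∀ w, ∃ v, K.rel w v) ∧ ∃ (g : ℕ → W) (w : W), Sat K g w φ

/-- Satisfiability over the class of ER frames. -/
def SatisfiableER (φ : HForm) : Prop :=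
  ∃ (W : Type) (K : Kripke W), Equivalence K.rel ∧ ∃ (g : ℕ → W) (w : W), Sat K g w φ

/-- The singleton reflexive Kripke structure `K₁` labeling every proposition and
nominal with its unique state. -/
def K1 : Kripke Unit := ⟨fun _ _ => True, fun _ => Set.univ, fun _ => ()⟩

/-- The assignment `g₁` mapping every state variable to the unique state of `K₁`. -/
def g1 : ℕ → Unit := fun _ => ()

/-- Unary operators of hybrid logic: `◇`, `□`, `↓x.`, `@_i` (nominal), `@_x` (state variable). -/
inductive HOp : Type where
  | dia : HOp
  | box : HOp
  | bind : ℕ → HOp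
  | atN : ℕ → HOp
  | atV : ℕ → HOp
deriving DecidableEq

def applyOp : HOp → HForm → HForm
  | .dia, φ => .dia φ
  | .box, φ => .box φ
  | .bind x, φ => .bind x φ
  | .atN i, φ => .atN i φ
  | .atV x, φ => .atV x φ

/-- Apply a sequence of operators to a formula (head of the list outermost). -/
def applyOps : List HOp → HForm → HForm
  | [], φ => φ
  | o :: os, φ => applyOp o (applyOps os φ)

/-- Evaluation of a CNF over `n` variables (a clause is a list of literals; a literal
is a pair of a variable index and a sign, `true` for positive) under an assignment. -/
def evalCNF {n : ℕ} (asg : Fin n → Bool) (cnf : List (List (Fin n × Bool))) : Prop :=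
  ∀ c ∈ cnf, ∃ l ∈ c, asg l.1 = l.2

/-- Truth of a quantified Boolean formula with `m` strictly alternating quantifiers
over the matrix `P`; `q = true` means the outermost quantifier is `∃`. -/
def QTrue : (q : Bool) → (m : ℕ) → ((Fin m → Bool) → Prop) → Prop
  | _, 0, P => P (fun i => i.elim0)
  | true, m + 1, P => ∃ b, QTrue false m (fun asg => P (Fin.cons b asg))
  | false, m + 1, P => ∀ b, QTrue true m (fun asg => P (Fin.cons b asg))

/-- Translation of a literal: the positive literal `x_i` becomes `@_{x_i} ◇⊤` and the
negative literal `¬x_i` becomes `@_{x_i} □⊥` (the variable `x_i` is the state variable `i`). -/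
def trLit {n : ℕ} (l : Fin n × Bool) : HForm :=
  if l.2 then HForm.atV l.1 (HForm.dia HForm.top) else HForm.atV l.1 (HForm.box HForm.bot)

/-- Translation `r` of a clause: the disjunction of the translations of its literals. -/
def trClause {n : ℕ} : List (Fin n × Bool) → HForm
  | [] => HForm.bot
  | [l] => trLit l
  | l :: l' :: ls => HForm.or (trLit l) (trClause (l' :: ls))

/-- Translation `r(ψ)` of a CNF: the conjunction of the translations of its clauses. -/
def trCNF {n : ℕ} : List (List (Fin n × Bool)) → HForm
  | [] => HForm.top
  | [c] => trClause c
  | c :: c' :: cs => HForm.and (trClause c) (trCNF (c' :: cs))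

/-- The quantifier prefix `@_s ◇↓x₁. @_s □↓x₂. ⋯ @_s Q'↓xₙ.` of `f(φ)`, where the
nominal `s` is `0`, the state variable `x_{i+1}` is `i`, and `Q' = ◇` for
existentially (odd position, `i` even) and `□` for universally quantified variables. -/
def qbfPrefix (n : ℕ) : List HOp :=
  (List.finRange n).flatMap (fun i =>
    [HOp.atN 0, if i.val % 2 = 0 then HOp.dia else HOp.box, HOp.bind i.val])

/-- The formula `f(φ) = (@_s ◇◇⊤) ∧ (@_s ◇□⊥) ∧ @_s◇↓x₁.@_s□↓x₂.⋯@_s Q'↓xₙ. r(ψ)`. -/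
def qbfFormula (n : ℕ) (cnf : List (List (Fin n × Bool))) : HForm :=
  HForm.and (HForm.atN 0 (HForm.dia (HForm.dia HForm.top)))
    (HForm.and (HForm.atN 0 (HForm.dia (HForm.box HForm.bot)))
      (applyOps (qbfPrefix n) (trCNF cnf)))

/-- The Kripke structure `K₂` with states `s = false`, `t = true`, transitive
transition relation `{(s,s),(s,t)}`, and the nominal `s` denoting the state `s`. -/
def K2 : Kripke Bool := ⟨fun a _ => a = false, fun _ => Set.univ, fun _ => false⟩

/-!
In `K₂` the state `s = false` sees both states and `t = true` sees none, so `@_x ◇⊤` holds iff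
`x` denotes `s` and `@_x □⊥` iff it denotes `t`: reading `s` as "true", `r(ψ)` evaluates `ψ`.
Since `s` sees every state, `@_s ◇↓x.` and `@_s □↓x.` quantify `x` over all states, whatever the
current state, so the prefix of `f(φ)` replays the quantifier prefix of `φ`, up to the bijection
`not` between states and truth values. The first two conjuncts of `f(φ)` hold in `K₂` outright.
-/

theorem applyOps_append (l₁ l₂ : List HOp) (φ : HForm) :
    applyOps (l₁ ++ l₂) φ = applyOps l₁ (applyOps l₂ φ) := by
  induction l₁ with
  | nil => rfl
  | cons o os ih => simp only [List.cons_append, applyOps, ih]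

def boolQuant (q : Bool) (p : Bool → Prop) : Prop :=
  if q then ∃ b, p b else ∀ b, p b

theorem QTrue_succ (q : Bool) (m : ℕ) (P : (Fin (m + 1) → Bool) → Prop) :
    QTrue q (m + 1) P ↔ boolQuant q (fun b => QTrue (!q) m (fun a => P (Fin.cons b a))) := by
  cases q <;> rfl

theorem QTrue_comp_of_surjective {e : Bool → Bool} (he : Function.Surjective e) :
    ∀ (q : Bool) (m : ℕ) (P : (Fin m → Bool) → Prop), QTrue q m (fun a => P (e ∘ a)) ↔ QTrue q m P
  | q, 0, P => by
    rw [QTrue, QTrue, Subsingleton.elim (e ∘ _) fun i => i.elim0]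
  | q, m + 1, P => by
    simp only [QTrue_succ, Fin.comp_cons]
    cases q
    · exact he.forall.symm.trans <| forall_congr' fun b =>
        QTrue_comp_of_surjective he _ m fun a => P (Fin.cons b a)
    · exact he.exists.symm.trans <| exists_congr fun b =>
        QTrue_comp_of_surjective he _ m fun a => P (Fin.cons b a)

def overrideFrom {α : Type} (g : ℕ → α) (o : ℕ) {m : ℕ} (a : Fin m → α) : ℕ → α :=
  fun y => if h : o ≤ y ∧ y < o + m then a ⟨y - o, by omega⟩ else g y

section overrideFrom

variable {α : Type} (g : ℕ → α)

theorem overrideFrom_fin_zero (o : ℕ) (a : Fin 0 → α) : overrideFrom g o a = g := by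
  funext y
  exact dif_neg (by omega)

theorem overrideFrom_zero_apply {m : ℕ} (a : Fin m → α) (i : Fin m) :
    overrideFrom g 0 a i = a i := by
  simp [overrideFrom]

theorem overrideFrom_updAsg (o : ℕ) (b : α) {m : ℕ} (a : Fin m → α) :
    overrideFrom (updAsg g o b) (o + 1) a = overrideFrom g o (Fin.cons b a) := by
  funext y
  unfold overrideFrom updAsg
  rcases lt_trichotomy y o with hy | rfl | hy
  · rw [dif_neg (by omega), dif_neg (by omega), if_neg (by omega)]
  · rw [dif_neg (by omega), dif_pos (by omega), if_pos rfl]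
    simp
  · by_cases hym : y < o + 1 + m
    · rw [dif_pos (by omega), dif_pos (by omega)]
      have : (⟨y - o, by omega⟩ : Fin (m + 1)) = Fin.succ ⟨y - (o + 1), by omega⟩ :=
        Fin.ext (by simp only [Fin.val_succ]; omega)
      rw [this, Fin.cons_succ]
    · rw [dif_neg (by omega), dif_neg (by omega), if_neg (by omega)]

end overrideFrom

theorem sat_K2_trLit {n : ℕ} (g : ℕ → Bool) (w : Bool) (l : Fin n × Bool) :
    Sat K2 g w (trLit l) ↔ !g l.1 = l.2 := by
  obtain ⟨i, _ | _⟩ := l <;> simp [trLit, Sat, K2]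

theorem sat_K2_trClause {n : ℕ} (g : ℕ → Bool) (w : Bool) :
    ∀ c : List (Fin n × Bool), Sat K2 g w (trClause c) ↔ ∃ l ∈ c, !g l.1 = l.2
  | [] => by simp [trClause, Sat]
  | [l] => by simp [trClause, sat_K2_trLit]
  | l :: l' :: ls => by
    simp [trClause, Sat, sat_K2_trLit, sat_K2_trClause g w (l' :: ls)]

theorem sat_K2_trCNF {n : ℕ} (g : ℕ → Bool) (w : Bool) :
    ∀ cnf : List (List (Fin n × Bool)),
      Sat K2 g w (trCNF cnf) ↔ evalCNF (fun i => !g i) cnf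
  | [] => by simp [trCNF, Sat, evalCNF]
  | [c] => by simp [trCNF, sat_K2_trClause, evalCNF]
  | c :: c' :: cs => by
    simp [trCNF, Sat, sat_K2_trClause, sat_K2_trCNF g w (c' :: cs), evalCNF]

def quantBlock (i : ℕ) : List HOp :=
  [HOp.atN 0, if i % 2 = 0 then HOp.dia else HOp.box, HOp.bind i]

theorem qbfPrefix_eq_flatMap_range' (n : ℕ) :
    qbfPrefix n = (List.range' 0 n).flatMap quantBlock := by
  rw [← List.range_eq_range', ← List.map_coe_finRange_eq_range, List.flatMap_map]
  rfl

theorem sat_K2_applyOps_quantBlock (g : ℕ → Bool) (w : Bool) (i : ℕ) (φ : HForm) :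
    Sat K2 g w (applyOps (quantBlock i) φ) ↔
      boolQuant (decide (i % 2 = 0)) (fun v => Sat K2 (updAsg g i v) v φ) := by
  by_cases hi : i % 2 = 0 <;> simp [quantBlock, applyOps, applyOp, Sat, K2, boolQuant, hi]

theorem sat_K2_applyOps_quantBlocks {P : (ℕ → Bool) → Prop} {φ : HForm}
    (hφ : ∀ g w, Sat K2 g w φ ↔ P g) (m : ℕ) :
    ∀ (o : ℕ) (g : ℕ → Bool) (w : Bool),
      Sat K2 g w (applyOps ((List.range' o m).flatMap quantBlock) φ) ↔
        QTrue (decide (o % 2 = 0)) m (fun a => P (overrideFrom g o a)) := by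
  induction m with
  | zero => intro o g w; simp [applyOps, hφ, QTrue, overrideFrom_fin_zero]
  | succ m ih =>
    intro o g w
    have hparity : (!decide (o % 2 = 0)) = decide ((o + 1) % 2 = 0) := by
      rcases Nat.mod_two_eq_zero_or_one o with h | h <;> simp [h, Nat.succ_mod_two_eq_zero_iff]
    rw [List.range'_succ, List.flatMap_cons, applyOps_append, sat_K2_applyOps_quantBlock,
      QTrue_succ, hparity]
    simp only [ih, overrideFrom_updAsg]

theorem sat_K2_qbfFormula (n : ℕ) (cnf : List (List (Fin n × Bool))) (g : ℕ → Bool) (w : Bool) :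
    Sat K2 g w (qbfFormula n cnf) ↔ QTrue true n (fun asg => evalCNF asg cnf) := by
  have hframe : Sat K2 g w (.atN 0 (.dia (.dia .top))) ∧ Sat K2 g w (.atN 0 (.dia (.box .bot))) :=
    ⟨⟨false, rfl, false, rfl, trivial⟩, ⟨true, rfl, fun v hv => by simp [K2] at hv⟩⟩
  rw [qbfFormula, Sat, Sat, and_iff_right hframe.1, and_iff_right hframe.2,
    qbfPrefix_eq_flatMap_range', sat_K2_applyOps_quantBlocks (fun g w => sat_K2_trCNF g w cnf)]
  simp only [overrideFrom_zero_apply]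
  exact QTrue_comp_of_surjective Bool.not_surjective true n (evalCNF · cnf)

/-- The quantified Boolean formula
`∃x₁∀x₂⋯Qxₙ ψ` (strictly alternating quantifiers, `ψ` in CNF) evaluates to true
iff `K₂, g, s ⊨ f(φ)` for every assignment `g`. -/
theorem qbf_reduction (n : ℕ) (cnf : List (List (Fin n × Bool))) :
    QTrue true n (fun asg => evalCNF asg cnf) ↔
      ∀ g : ℕ → Bool, Sat K2 g false (qbfFormula n cnf) :=
  ⟨fun h g => (sat_K2_qbfFormula n cnf g false).2 h,
    fun h => (sat_K2_qbfFormula n cnf (fun _ => false) false).1 (h _)⟩
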